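/- There is no simple graph G̃ on 32 vertices with exactly 39 edges such that the 3×3 matrix with entries determined by p = −31/153, q = 5/51 as follows is positive semidefinite: M₁₁ = 18 + 2(39+β−α)p + (306 − 2(39+β−α))q, M₂₂ = 14 + 2βp + (182 − 2β)q, M₁₂ = (α−2β)p + (252 − (α−2β))q, M₁₃ = 36p, M₂₃ = 28p, M₃₃ = 2+2p, where W is a 14-set of vertices of largest degrees, α the degree sum of W and β the edge count inside W. -/
import Mathlib


theorem no_graph_with_psd_gram
    {V : Type*} [Fintype V] [DecidableEq V]
    (G : SimpleGraph V) [DecidableRel G.Adj]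
    (hV : Fintype.card V = 32)
    (hE : G.edgeFinset.card = 39)
    (W : Finset V) (hW : W.card = 14)
    (htop : ∀ v ∈ W, ∀ u ∉ W, G.degree u ≤ G.degree v)
    (α β : ℕ)
    (hα : α = ∑ v ∈ W, G.degree v)
    (hβ : β = (G.edgeFinset.filter (fun e => ∀ v ∈ e, v ∈ W)).card)
    (p q : ℝ) (hp : p = -31 / 153) (hq : q = 5 / 51) :
    ¬ (!![18 + 2 * (39 + (β : ℝ) - α) * p + (306 - 2 * (39 + (β : ℝ) - α)) * q,
          ((α : ℝ) - 2 * β) * p + (252 - ((α : ℝ) - 2 * β)) * q,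
          36 * p;
          ((α : ℝ) - 2 * β) * p + (252 - ((α : ℝ) - 2 * β)) * q,
          14 + 2 * β * p + (182 - 2 * (β : ℝ)) * q,
          28 * p;
          36 * p, 28 * p, 2 + 2 * p] : Matrix (Fin 3) (Fin 3) ℝ).PosSemidef := by
  intro hpsd
  -- handshake: total degree sum is 78
  have hsum : ∑ v, G.degree v = 78 := by
    rw [SimpleGraph.sum_degrees_eq_twice_card_edges, hE]
  -- α ≥ 42
  have hα42 : 42 ≤ α := by
    by_contra hlt
    push_neg at hlt
    -- some vertex of W has degree ≤ 2
    have hex : ∃ v ∈ W, G.degree v ≤ 2 := by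
      by_contra hno
      push_neg at hno
      have : 14 * 3 ≤ ∑ v ∈ W, G.degree v := by
        calc 14 * 3 = W.card * 3 := by rw [hW]
        _ ≤ ∑ v ∈ W, G.degree v := by
          have := Finset.card_nsmul_le_sum W (fun v => G.degree v) 3
            (fun v hv => hno v hv)
          simpa [smul_eq_mul] using this
      omega
    obtain ⟨v, hvW, hv2⟩ := hex
    have hout : ∀ u ∈ Wᶜ, G.degree u ≤ 2 := fun u hu =>
      le_trans (htop v hvW u (Finset.mem_compl.mp hu)) hv2
    have hcard : (Wᶜ : Finset V).card = 18 := by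
      rw [Finset.card_compl, hW, hV]
    have hsumout : ∑ u ∈ Wᶜ, G.degree u ≤ 36 := by
      calc ∑ u ∈ Wᶜ, G.degree u ≤ ∑ _u ∈ Wᶜ, 2 := Finset.sum_le_sum hout
      _ = 36 := by rw [Finset.sum_const, hcard]; rfl
    have hsplit : ∑ v ∈ W, G.degree v + ∑ u ∈ Wᶜ, G.degree u = 78 := by
      rw [Finset.sum_add_sum_compl, hsum]
    omega
  have hdet : (0:ℝ) ≤ (!![18 + 2 * (39 + (β : ℝ) - α) * p + (306 - 2 * (39 + (β : ℝ) - α)) * q,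
          ((α : ℝ) - 2 * β) * p + (252 - ((α : ℝ) - 2 * β)) * q,
          36 * p;
          ((α : ℝ) - 2 * β) * p + (252 - ((α : ℝ) - 2 * β)) * q,
          14 + 2 * β * p + (182 - 2 * (β : ℝ)) * q,
          28 * p;
          36 * p, 28 * p, 2 + 2 * p] : Matrix (Fin 3) (Fin 3) ℝ).det := by
    rw [hpsd.1.det_eq_prod_eigenvalues]
    exact Finset.prod_nonneg fun i _ => by
      exact_mod_cast hpsd.eigenvalues_nonneg i
  simp [Matrix.det_fin_three] at hdet
  have ha : (42 : ℝ) ≤ (α : ℝ) := by exact_mod_cast hα42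
  have hb : (0 : ℝ) ≤ (β : ℝ) := Nat.cast_nonneg β
  subst hp hq
  nlinarith [sq_nonneg ((α : ℝ) - 42), sq_nonneg ((β : ℝ)), mul_nonneg (sub_nonneg.mpr ha) hb]
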